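/- arXiv:1207.4650 — 2 statements merged into one kernel-verified Lean document; each statement's English description precedes it below -/
import Mathlib

section
/- Let G be a finitely generated group, p a prime, k a nonnegative integer, and x ∈ G. Suppose that x^{p^k} lies in every normal subgroup of G of index a power of p. Then RG_p(G/⟨⟨x^{p^k}⟩⟩) = RG_p(G), where ⟨⟨x^{p^k}⟩⟩ is the normal closure of x^{p^k} in G. -/
/-!
Let `N = ⟪x^{p^k}⟫`. For a normal subgroup `H` of `G` of `p`-power index, `[H,H]H^p` is
characteristic in `H`, hence normal in `G`, and it has `p`-power index in `G` because
`H/[H,H]H^p` is a finitely generated abelian group of exponent `p`. So `x^{p^k}` lies in it, and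
`N ≤ [H,H]H^p ≤ H`. Consequently `H ↦ H/N` is an index-preserving bijection between the normal
subgroups of `p`-power index of `G` and of `G/N`, and `H → H/N` has kernel inside `[H,H]H^p`, so
`d_p(H/N) = d_p(H)`: the two infima run over the same set of numbers.
-/

/-- `dGen G` is the minimal number of generators of the group `G`. -/
noncomputable def dGen (G : Type*) [Group G] : ℕ :=
  sInf {n : ℕ | ∃ S : Finset G, S.card = n ∧ Subgroup.closure (S : Set G) = ⊤}

/-- The rank gradient of `G`. -/
noncomputable def rankGradient (G : Type*) [Group G] : ℝ :=
  sInf {r : ℝ | ∃ H : Subgroup G, H.index ≠ 0 ∧ r = ((dGen H : ℝ) - 1) / (H.index : ℝ)}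

open scoped commutatorElement

/-- The subgroup `[G,G]G^p` of `G` (as a normal closure of its generators). -/
def pCommPow (p : ℕ) (G : Type*) [Group G] : Subgroup G :=
  Subgroup.normalClosure ({x | ∃ a b : G, x = ⁅a, b⁆} ∪ {x | ∃ g : G, x = g ^ p})

instance pCommPow_normal (p : ℕ) (G : Type*) [Group G] : (pCommPow p G).Normal :=
  Subgroup.normalClosure_normal

/-- `d_p(G) = d(G/([G,G]G^p))`. -/
noncomputable def dp (p : ℕ) (G : Type*) [Group G] : ℕ :=
  dGen (G ⧸ pCommPow p G)

/-- The `p`-gradient of `G`. -/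
noncomputable def pGradient (p : ℕ) (G : Type*) [Group G] : ℝ :=
  sInf {r : ℝ | ∃ H : Subgroup G, H.Normal ∧ (∃ k : ℕ, H.index = p ^ k) ∧
    r = ((dp p H : ℝ) - 1) / (H.index : ℝ)}

/-- The `p`-residual: intersection of all normal subgroups of `p`-power index. -/
def pResidual (p : ℕ) (G : Type*) [Group G] : Subgroup G :=
  ⨅ H ∈ {H : Subgroup G | H.Normal ∧ ∃ k : ℕ, H.index = p ^ k}, H

instance pResidual_normal (p : ℕ) (G : Type*) [Group G] : (pResidual p G).Normal := by
  constructor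
  intro n hn g
  simp only [pResidual, Subgroup.mem_iInf] at hn ⊢
  intro H hH
  exact hH.1.conj_mem n (hn H hH) g


open Subgroup Function
open scoped IsMulCommutative

section

variable {p : ℕ} {G Q : Type*} [Group G] [Group Q]

lemma exists_finset_closure_eq_top_of_mulEquiv (e : G ≃* Q) {n : ℕ}
    (h : ∃ S : Finset G, S.card = n ∧ closure (S : Set G) = ⊤) :
    ∃ S : Finset Q, S.card = n ∧ closure (S : Set Q) = ⊤ := by
  obtain ⟨S, hcard, htop⟩ := h
  refine ⟨S.map e.toEquiv.toEmbedding, by rw [Finset.card_map, hcard], ?_⟩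
  have hmap := MonoidHom.map_closure e.toMonoidHom (S : Set G)
  rw [htop, map_top_of_surjective _ e.surjective] at hmap
  simpa using hmap.symm

lemma dGen_congr (e : G ≃* Q) : dGen G = dGen Q := by
  unfold dGen
  congr 1
  ext n
  exact ⟨exists_finset_closure_eq_top_of_mulEquiv e,
    exists_finset_closure_eq_top_of_mulEquiv e.symm⟩

lemma map_pCommPow (f : G →* Q) (hf : Surjective f) : (pCommPow p G).map f = pCommPow p Q := by
  rw [pCommPow, pCommPow, map_normalClosure _ _ hf, Set.image_union]
  congr 2
  · ext y
    constructor
    · rintro ⟨_, ⟨a, b, rfl⟩, rfl⟩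
      exact ⟨f a, f b, map_commutatorElement f a b⟩
    · rintro ⟨a, b, rfl⟩
      obtain ⟨a, rfl⟩ := hf a
      obtain ⟨b, rfl⟩ := hf b
      exact ⟨⁅a, b⁆, ⟨a, b, rfl⟩, map_commutatorElement f a b⟩
  · ext y
    constructor
    · rintro ⟨_, ⟨a, rfl⟩, rfl⟩
      exact ⟨f a, map_pow f a p⟩
    · rintro ⟨a, rfl⟩
      obtain ⟨a, rfl⟩ := hf a
      exact ⟨a ^ p, ⟨a, rfl⟩, map_pow f a p⟩

instance pCommPow_characteristic : (pCommPow p G).Characteristic :=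
  characteristic_iff_map_eq.mpr fun ϕ => map_pCommPow ϕ.toMonoidHom ϕ.surjective

lemma pow_mem_pCommPow (g : G) : g ^ p ∈ pCommPow p G :=
  subset_normalClosure (Or.inr ⟨g, rfl⟩)

lemma commutator_le_pCommPow : commutator G ≤ pCommPow p G :=
  commutator_le.mpr fun a _ b _ => subset_normalClosure (Or.inl ⟨a, b, rfl⟩)

lemma exists_index_pCommPow_eq_pow [Group.FG G] (hp : p.Prime) :
    ∃ m : ℕ, (pCommPow p G).index = p ^ m := by
  have : Fact p.Prime := ⟨hp⟩
  have : IsMulCommutative (G ⧸ pCommPow p G) :=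
    Normal.quotient_commutative_iff_commutator_le.mpr commutator_le_pCommPow
  have hexp : ∀ q : G ⧸ pCommPow p G, q ^ p = 1 := by
    rintro ⟨g⟩
    exact (QuotientGroup.eq_one_iff _).mpr (pow_mem_pCommPow g)
  have : Finite (G ⧸ pCommPow p G) := CommGroup.finite_of_fg_isMulTorsion _ fun q =>
    isOfFinOrder_iff_pow_eq_one.mpr ⟨p, hp.pos, hexp q⟩
  obtain ⟨m, hm⟩ := IsPGroup.iff_card.mp fun q => ⟨1, by rw [pow_one, hexp q]⟩
  exact ⟨m, by rw [index_eq_card, hm]⟩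

lemma exists_index_map_subtype_pCommPow_eq_pow [Group.FG G] (hp : p.Prime) {H : Subgroup G}
    {l : ℕ} (hH : H.index = p ^ l) : ∃ j : ℕ, ((pCommPow p H).map H.subtype).index = p ^ j := by
  have : H.FiniteIndex := ⟨by rw [hH]; exact pow_ne_zero l hp.ne_zero⟩
  have : Group.FG H := fg_of_index_ne_zero H
  obtain ⟨m, hm⟩ := exists_index_pCommPow_eq_pow (G := H) hp
  exact ⟨m + l, by rw [index_map_subtype, hm, hH, pow_add]⟩

lemma dp_eq_of_surjective (f : G →* Q) (hf : Surjective f) (hker : f.ker ≤ pCommPow p G) :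
    dp p Q = dp p G := by
  set ψ := (QuotientGroup.mk' (pCommPow p Q)).comp f
  have hψ : ψ.ker = pCommPow p G := by
    rw [← MonoidHom.comap_ker, QuotientGroup.ker_mk', ← map_pCommPow f hf, comap_map_eq,
      sup_eq_left.mpr hker]
  exact (dGen_congr ((QuotientGroup.quotientMulEquivOfEq hψ.symm).trans
    (QuotientGroup.quotientKerEquivOfSurjective ψ
      ((QuotientGroup.mk'_surjective _).comp hf)))).symm

lemma dp_map_eq (f : G →* Q) {H : Subgroup G}
    (hker : f.ker ≤ (pCommPow p H).map H.subtype) : dp p (H.map f) = dp p H := by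
  refine dp_eq_of_surjective (f.subgroupMap H) (f.subgroupMap_surjective H) fun h hh => ?_
  have hfh : (h : G) ∈ f.ker := by simpa using congrArg Subtype.val hh
  exact (mem_map_iff_mem H.subtype_injective).mp (hker hfh)

theorem pGradient_eq_of_surjective (f : G →* Q) (hf : Surjective f)
    (hker : ∀ H : Subgroup G, H.Normal → (∃ l : ℕ, H.index = p ^ l) →
      f.ker ≤ (pCommPow p H).map H.subtype) :
    pGradient p Q = pGradient p G := by
  unfold pGradient
  congr 1
  ext r
  constructor
  · rintro ⟨H, hH, ⟨l, hl⟩, rfl⟩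
    have hidx : (H.comap f).index = H.index := index_comap_of_surjective H hf
    refine ⟨H.comap f, hH.comap f, ⟨l, hidx.trans hl⟩, ?_⟩
    rw [hidx, ← dp_map_eq f (hker _ (hH.comap f) ⟨l, hidx.trans hl⟩),
      map_comap_eq_self_of_surjective hf]
  · rintro ⟨H, hH, hl, rfl⟩
    have hkerH : f.ker ≤ H := (hker H hH hl).trans (map_subtype_le _)
    refine ⟨H.map f, hH.map f hf, index_map_eq H hf hkerH ▸ hl, ?_⟩
    rw [index_map_eq H hf hkerH, dp_map_eq f (hker H hH hl)]

end

/-- if `x^{p^k}` lies in every normal subgroup of `p`-power index,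
then `RG_p(G/⟪x^{p^k}⟫) = RG_p(G)`. -/
theorem pGradient_quotient_eq (G : Type*) [Group G] [Group.FG G]
    (p : ℕ) (hp : p.Prime) (k : ℕ) (x : G)
    (hmem : ∀ H : Subgroup G, H.Normal → (∃ l : ℕ, H.index = p ^ l) → x ^ p ^ k ∈ H) :
    pGradient p (G ⧸ Subgroup.normalClosure {x ^ p ^ k}) = pGradient p G := by
  refine pGradient_eq_of_surjective _ (QuotientGroup.mk'_surjective _) fun H hH ⟨l, hl⟩ => ?_
  obtain ⟨j, hj⟩ := exists_index_map_subtype_pCommPow_eq_pow hp hl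
  rw [QuotientGroup.ker_mk']
  exact normalClosure_le_normal (Set.singleton_subset_iff.mpr (hmem _ inferInstance ⟨j, hj⟩))
end

section
/- Let G be a finitely generated group, p a prime, I a totally ordered set, and (N_i)_{i ∈ I} a family of normal subgroups of G with N_i ⊆ N_j whenever i ≤ j. Let N = ⋃_{i ∈ I} N_i. Let K be a normal subgroup of G/N of index a power of p and let H' be the preimage of K under the quotient map G → G/N. Then there exists n ∈ I such that for all i ≥ n, d_p(H'/N_i) = d_p(K), where H'/N_i denotes the image of H' in G/N_i. -/
open scoped commutatorElement

/-!
Let `H'` be the preimage of `K`. It has finite index in `G`, so it is finitely generated and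
`H' / [H',H']H'^p` is finite. For a surjection `f` out of `H'`, `d_p` of the image is
`d(H' / ([H',H']H'^p ⊔ ker f))`; the kernels of `H' → H'/N_i` and `H' → K` are `N_i` and `N`.
The subgroups `[H',H']H'^p ⊔ N_i` increase with `i` and all lie between `[H',H']H'^p` and `H'`,
so they take finitely many values; the chain stabilizes, necessarily at `[H',H']H'^p ⊔ N`.
-/

open Function

section GroupTheory

variable {A B : Type*} [Group A] [Group B]

lemma Subgroup.closure_image_eq_top_of_surjective {f : A →* B} (hf : Surjective f) {s : Set A}
    (hs : Subgroup.closure s = ⊤) : Subgroup.closure (f '' s) = ⊤ := by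
  rw [← MonoidHom.map_closure, hs, Subgroup.map_top_of_surjective f hf]

lemma dGen_congr_s13 (e : A ≃* B) : dGen A = dGen B := by
  classical
  unfold dGen
  congr 1
  ext n
  constructor
  · rintro ⟨S, rfl, hS⟩
    refine ⟨S.image e, Finset.card_image_of_injective _ e.injective, ?_⟩
    rw [Finset.coe_image]
    exact Subgroup.closure_image_eq_top_of_surjective (f := (e : A →* B)) e.surjective hS
  · rintro ⟨S, rfl, hS⟩
    refine ⟨S.image e.symm, Finset.card_image_of_injective _ e.symm.injective, ?_⟩
    rw [Finset.coe_image]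
    exact Subgroup.closure_image_eq_top_of_surjective (f := (e.symm : B →* A)) e.symm.surjective hS

lemma dGen_quotient_congr {M M' : Subgroup A} [M.Normal] [M'.Normal] (h : M = M') :
    dGen (A ⧸ M) = dGen (A ⧸ M') :=
  dGen_congr_s13 (QuotientGroup.quotientMulEquivOfEq h)

lemma map_pCommPow_of_surjective (p : ℕ) {f : A →* B} (hf : Surjective f) :
    (pCommPow p A).map f = pCommPow p B := by
  rw [pCommPow, pCommPow, Subgroup.map_normalClosure _ _ hf]
  congr 1
  ext y
  simp only [Set.image_union, Set.mem_union, Set.mem_image, Set.mem_ofPred_eq]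
  constructor
  · rintro (⟨_, ⟨a, b, rfl⟩, rfl⟩ | ⟨_, ⟨g, rfl⟩, rfl⟩)
    · exact Or.inl ⟨f a, f b, map_commutatorElement f a b⟩
    · exact Or.inr ⟨f g, map_pow f g p⟩
  · rintro (⟨a, b, rfl⟩ | ⟨g, rfl⟩)
    · obtain ⟨a, rfl⟩ := hf a
      obtain ⟨b, rfl⟩ := hf b
      exact Or.inl ⟨⁅a, b⁆, ⟨a, b, rfl⟩, map_commutatorElement f a b⟩
    · obtain ⟨g, rfl⟩ := hf g
      exact Or.inr ⟨g ^ p, ⟨g, rfl⟩, map_pow f g p⟩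

lemma dp_eq_dGen_quotient_of_surjective (p : ℕ) {f : A →* B} (hf : Surjective f) :
    dp p B = dGen (A ⧸ (pCommPow p A ⊔ f.ker)) := by
  let g := (QuotientGroup.mk' (pCommPow p B)).comp f
  have hker : g.ker = pCommPow p A ⊔ f.ker := by
    rw [← MonoidHom.comap_ker, QuotientGroup.ker_mk', ← map_pCommPow_of_surjective p hf,
      Subgroup.comap_map_eq]
  calc dp p B = dGen (A ⧸ g.ker) :=
        (dGen_congr_s13 (QuotientGroup.quotientKerEquivOfSurjective g
          ((QuotientGroup.mk'_surjective _).comp hf))).symm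
    _ = dGen (A ⧸ (pCommPow p A ⊔ f.ker)) := dGen_quotient_congr hker

lemma dp_map_eq_dGen_quotient (p : ℕ) (f : A →* B) (H : Subgroup A) :
    dp p (H.map f) = dGen (H ⧸ (pCommPow p H ⊔ f.ker.subgroupOf H)) := by
  rw [dp_eq_dGen_quotient_of_surjective p (f.subgroupMap_surjective H)]
  exact dGen_quotient_congr (by rw [Subgroup.ker_subgroupMap])

instance isMulCommutative_quotient_pCommPow (p : ℕ) : IsMulCommutative (A ⧸ pCommPow p A) := by
  refine isMulCommutative_iff.2 fun x y ↦ ?_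
  obtain ⟨a, rfl⟩ := QuotientGroup.mk'_surjective (pCommPow p A) x
  obtain ⟨b, rfl⟩ := QuotientGroup.mk'_surjective (pCommPow p A) y
  rw [← commutatorElement_eq_one_iff_mul_comm, ← map_commutatorElement, QuotientGroup.mk'_apply,
    QuotientGroup.eq_one_iff]
  exact Subgroup.subset_normalClosure (Or.inl ⟨a, b, rfl⟩)

open scoped IsMulCommutative in
lemma finite_quotient_pCommPow [Group.FG A] {p : ℕ} (hp : p ≠ 0) :
    Finite (A ⧸ pCommPow p A) := by
  have : Group.FG (A ⧸ pCommPow p A) := Group.fg_of_surjective (QuotientGroup.mk'_surjective _)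
  refine CommGroup.finite_of_fg_isMulTorsion _ fun x ↦ ?_
  obtain ⟨a, rfl⟩ := QuotientGroup.mk'_surjective (pCommPow p A) x
  refine isOfFinOrder_iff_pow_eq_one.2 ⟨p, Nat.pos_of_ne_zero hp, ?_⟩
  rw [← map_pow, QuotientGroup.mk'_apply, QuotientGroup.eq_one_iff]
  exact Subgroup.subset_normalClosure (Or.inr ⟨a, rfl⟩)

end GroupTheory

lemma Monotone.exists_forall_ge_eq_of_finite_range {α β : Type*} [Preorder α] [Nonempty α]
    [PartialOrder β] {f : α → β} (hf : Monotone f) (hfin : (Set.range f).Finite) :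
    ∃ n, ∀ i, n ≤ i → f i = f n := by
  obtain ⟨n, -, hmax⟩ := Set.Finite.exists_maximalFor' f Set.univ (by rwa [Set.image_univ])
    Set.univ_nonempty
  exact ⟨n, fun i hi ↦ le_antisymm (hmax trivial (hf hi)) (hf hi)⟩

lemma Subgroup.exists_sup_eq_of_finite_quotient {A : Type*} [Group A] {M : Subgroup A} [M.Normal]
    [Finite (A ⧸ M)] {ι : Type*} [Preorder ι] [IsDirected ι (· ≤ ·)] [Nonempty ι]
    {L : ι → Subgroup A} (hL : Monotone L) {L' : Subgroup A} (hL' : (L' : Set A) = ⋃ i, L i) :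
    ∃ n, ∀ i, n ≤ i → M ⊔ L i = M ⊔ L' := by
  have hfin : (Set.range fun i ↦ M ⊔ L i).Finite := by
    refine (Set.finite_range (Subgroup.comap (QuotientGroup.mk' M))).subset ?_
    rintro _ ⟨i, rfl⟩
    refine ⟨(M ⊔ L i).map (QuotientGroup.mk' M), ?_⟩
    rw [Subgroup.comap_map_eq, QuotientGroup.ker_mk', sup_eq_left.2 le_sup_left]
  obtain ⟨n, hn⟩ := Monotone.exists_forall_ge_eq_of_finite_range
    (fun i j hij ↦ sup_le_sup_left (hL hij) M) hfin
  have hLL' : ∀ i, L i ≤ L' := fun i x hx ↦ by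
    rw [← SetLike.mem_coe, hL']
    exact Set.mem_iUnion_of_mem i hx
  refine ⟨n, fun i hi ↦ le_antisymm (sup_le_sup_left (hLL' i) M) (sup_le le_sup_left ?_)⟩
  intro x hx
  rw [← SetLike.mem_coe, hL', Set.mem_iUnion] at hx
  obtain ⟨j, hj⟩ := hx
  obtain ⟨k, hjk, hik⟩ := exists_ge_ge j i
  have hxk : x ∈ M ⊔ L k := Subgroup.mem_sup_right (hL hjk hj)
  rwa [hn k (hi.trans hik), ← hn i hi] at hxk

theorem dp_eventually_constant_general (G : Type*) [Group G] [Group.FG G] (p : ℕ) (hp : p.Prime)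
    (I : Type*) [LinearOrder I] (Nf : I → Subgroup G) [hNf : ∀ i, (Nf i).Normal]
    (hmono : ∀ i j : I, i ≤ j → Nf i ≤ Nf j)
    (N : Subgroup G) [hN : N.Normal] (hNU : (N : Set G) = ⋃ i, (Nf i : Set G))
    (K : Subgroup (G ⧸ N)) (hK : ∃ k : ℕ, K.index = p ^ k) :
    ∃ n : I, ∀ i : I, n ≤ i →
      dp p ((K.comap (QuotientGroup.mk' N)).map (QuotientGroup.mk' (Nf i))) = dp p K := by
  obtain ⟨k, hk⟩ := hK
  set H' := K.comap (QuotientGroup.mk' N)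
  have : H'.FiniteIndex := ⟨by
    rw [Subgroup.index_comap_of_surjective _ (QuotientGroup.mk'_surjective N), hk]
    exact pow_ne_zero k hp.ne_zero⟩
  have := finite_quotient_pCommPow (A := H') hp.ne_zero
  have : Nonempty I := by
    have h1 : (1 : G) ∈ (N : Set G) := N.one_mem
    rw [hNU, Set.mem_iUnion] at h1
    obtain ⟨i, -⟩ := h1
    exact ⟨i⟩
  obtain ⟨n, hn⟩ := Subgroup.exists_sup_eq_of_finite_quotient (M := pCommPow p H')
    (L := fun i ↦ (Nf i).subgroupOf H') (fun i j hij ↦ Subgroup.comap_mono (hmono i j hij))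
    (L' := N.subgroupOf H') (by simp only [Subgroup.coe_subgroupOf, hNU, Set.preimage_iUnion])
  refine ⟨n, fun i hi ↦ ?_⟩
  rw [← Subgroup.map_comap_eq_self_of_surjective (QuotientGroup.mk'_surjective N) K,
    dp_map_eq_dGen_quotient, dp_map_eq_dGen_quotient]
  exact dGen_quotient_congr (by rw [QuotientGroup.ker_mk', QuotientGroup.ker_mk', hn i hi])

/-- for `K ⊴ G/N` of `p`-power index with preimage `H'` in `G`, there is
an `n ∈ I` such that `d_p(H'/N_i) = d_p(K)` for all `i ≥ n`. -/
theorem dp_eventually_constant (G : Type*) [Group G] [Group.FG G] (p : ℕ) (hp : p.Prime)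
    (I : Type*) [LinearOrder I] (Nf : I → Subgroup G) [hNf : ∀ i, (Nf i).Normal]
    (hmono : ∀ i j : I, i ≤ j → Nf i ≤ Nf j)
    (N : Subgroup G) [hN : N.Normal] (hNU : (N : Set G) = ⋃ i, (Nf i : Set G))
    (K : Subgroup (G ⧸ N)) [K.Normal] (hK : ∃ k : ℕ, K.index = p ^ k) :
    ∃ n : I, ∀ i : I, n ≤ i →
      dp p ((K.comap (QuotientGroup.mk' N)).map (QuotientGroup.mk' (Nf i))) = dp p K :=
  dp_eventually_constant_general G p hp I Nf (hNf := hNf) hmono N (hN := hN) hNU K hK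
end
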